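/- With Θ as above and the spherical dilation (D_a f)(θ,φ) = κ(a,θ)^{1/2} f(2 arctan(a^{-1} tan(θ/2)), φ) where κ(a,θ) = 4a²/((a²−1)cos θ + (a²+1))², and the planar dilation (D_a⁺ g)(r,φ) = g(r/a, φ), one has Θ ∘ D_a = D_a⁺ ∘ Θ for every a > 0. -/

import Mathlib

open Real Set

/-- The cocycle of the Lorentz group action on the sphere. -/
noncomputable def kappa (a θ : ℝ) : ℝ :=
  4 * a ^ 2 / (((a ^ 2 - 1) * Real.cos θ + (a ^ 2 + 1)) ^ 2)

/-- The spherical dilation `(D_a f)(θ,φ) = κ(a,θ)^{1/2} f(2 arctan(a⁻¹ tan(θ/2)), φ)`. -/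
noncomputable def Dsph (a : ℝ) (f : ℝ → ℝ → ℂ) : ℝ → ℝ → ℂ :=
  fun θ φ => ((Real.sqrt (kappa a θ) : ℝ) : ℂ)
    * f (2 * Real.arctan (a⁻¹ * Real.tan (θ / 2))) φ

/-- The stereographic-projection transfer `(Θf)(r,φ) = (2r/(1+r²)) f(2 arctan r, φ)`. -/
noncomputable def Theta (f : ℝ → ℝ → ℂ) : ℝ → ℝ → ℂ :=
  fun r φ => ((2 * r / (1 + r ^ 2) : ℝ) : ℂ) * f (2 * Real.arctan r) φ

/-- Intertwining of spherical and planar dilations: `Θ ∘ D_a = D_a⁺ ∘ Θ`, i.e.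
`(Θ(D_a f))(r,φ) = (Θf)(r/a, φ)` for every `a > 0` and `r > 0`. -/
theorem stmt11 (a : ℝ) (ha : 0 < a) (f : ℝ → ℝ → ℂ) (r φ : ℝ) (hr : 0 < r) :
    Theta (Dsph a f) r φ = Theta f (r / a) φ := by
  have hr2 : (0:ℝ) < 1 + r ^ 2 := by positivity
  have har : (0:ℝ) < a ^ 2 + r ^ 2 := by positivity
  have hcos : Real.cos (2 * Real.arctan r) = (1 - r ^ 2) / (1 + r ^ 2) := by
    rw [Real.cos_two_mul, Real.cos_sq_arctan]
    field_simp
    ring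
  have htan : Real.tan (2 * Real.arctan r / 2) = r := by
    rw [mul_div_cancel_left₀ _ (two_ne_zero), Real.tan_arctan]
  have hk : Real.sqrt (kappa a (2 * Real.arctan r)) = a * (1 + r ^ 2) / (a ^ 2 + r ^ 2) := by
    unfold kappa
    rw [hcos]
    have heq : 4 * a ^ 2 / ((a ^ 2 - 1) * ((1 - r ^ 2) / (1 + r ^ 2)) + (a ^ 2 + 1)) ^ 2
        = (a * (1 + r ^ 2) / (a ^ 2 + r ^ 2)) ^ 2 := by
      have hden : (a ^ 2 - 1) * ((1 - r ^ 2) / (1 + r ^ 2)) + (a ^ 2 + 1)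
          = 2 * (a ^ 2 + r ^ 2) / (1 + r ^ 2) := by
        field_simp
        ring
      rw [hden, div_pow, div_div_eq_mul_div, div_pow, div_eq_div_iff (by positivity) (by positivity)]
      ring
    rw [heq, Real.sqrt_sq (by positivity)]
  unfold Theta Dsph
  rw [hk, htan]
  have harg : a⁻¹ * r = r / a := (div_eq_inv_mul r a).symm
  rw [harg]
  have hsc : ((2 * r / (1 + r ^ 2) : ℝ) : ℂ) * ((a * (1 + r ^ 2) / (a ^ 2 + r ^ 2) : ℝ) : ℂ)
      = ((2 * (r / a) / (1 + (r / a) ^ 2) : ℝ) : ℂ) := by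
    push_cast
    have ha' : (a:ℂ) ≠ 0 := by exact_mod_cast ha.ne'
    have h1 : ((1 + r ^ 2 : ℝ) : ℂ) ≠ 0 := by exact_mod_cast hr2.ne'
    have h2 : ((a ^ 2 + r ^ 2 : ℝ) : ℂ) ≠ 0 := by exact_mod_cast har.ne'
    push_cast at h1 h2
    have h3 : (1 : ℂ) + ((r:ℂ) / a) ^ 2 ≠ 0 := by
      field_simp
      intro h
      apply h2
      exact (div_eq_zero_iff.mp h).resolve_right (pow_ne_zero 2 ha')
    field_simp
  rw [← mul_assoc, hsc]
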